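/- Let T_1 and T_2 be balanced trees with disjoint vertex sets, and let T be the tree obtained from their disjoint union by identifying the root of T_1 with the root of T_2. If f is a function on the vertices of T_1 with L_{T_1} f = λ f (where L_{T_1} is the graph Laplacian of T_1) and f(root) = 0, then the function on the vertices of T that equals f on the vertices of T_1 and 0 on all other vertices satisfies L_T g = λ g, where L_T is the graph Laplacian of T. -/

import Mathlib

open scoped Classical

/-- Vertices of the balanced tree with `k` levels and branching sequence `c`:
a vertex at level `l` (`0 ≤ l ≤ k-1`) is a function assigning to each `i < l` a
label in `Fin (c i)` (the label of the level-`(i+1)` ancestor among its siblings). -/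
abbrev BTVert (k : ℕ) (c : ℕ → ℕ) : Type := Σ l : Fin k, ∀ i : Fin l.val, Fin (c i.val)

/-- `p` is the parent of `v` in the balanced tree. -/
def IsParentOf {k : ℕ} {c : ℕ → ℕ} (p v : BTVert k c) : Prop :=
  ∃ h : p.1.val + 1 = v.1.val,
    ∀ i : Fin p.1.val, v.2 ⟨i.val, by have := i.isLt; omega⟩ = p.2 i

/-- The balanced tree as a simple graph: each non-root vertex is adjacent to its parent. -/
def btGraph (k : ℕ) (c : ℕ → ℕ) : SimpleGraph (BTVert k c) where
  Adj u v := IsParentOf u v ∨ IsParentOf v u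
  symm := ⟨fun u v (h : IsParentOf u v ∨ IsParentOf v u) => h.symm⟩
  loopless := ⟨fun v h => by
    rcases h with ⟨h, -⟩ | ⟨h, -⟩ <;> omega⟩

/-- The root (the unique vertex at level 0). -/
def btRoot (k : ℕ) (c : ℕ → ℕ) (hk : 0 < k) : BTVert k c :=
  ⟨⟨0, hk⟩, fun i => i.elim0⟩

/-- `u` belongs to the maximal subtree rooted at `v` (`u` is `v` or a descendant of `v`). -/
def InSubtree {k : ℕ} {c : ℕ → ℕ} (v u : BTVert k c) : Prop :=
  ∃ h : v.1.val ≤ u.1.val,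
    ∀ i : Fin v.1.val, u.2 ⟨i.val, by have := i.isLt; omega⟩ = v.2 i

/-- A function on the vertices is stratified if it only depends on the level. -/
def Stratified {k : ℕ} {c : ℕ → ℕ} (f : BTVert k c → ℝ) : Prop :=
  ∀ u v : BTVert k c, u.1 = v.1 → f u = f v

/-- Number of vertices at level `l`: `n(l) = c(0) ⋯ c(l-1)`. -/
def nlev (c : ℕ → ℕ) (l : ℕ) : ℕ := ∏ i ∈ Finset.range l, c i

/-- The common degree `d(l)` of the vertices at level `l`. -/
def branchDeg (k : ℕ) (c : ℕ → ℕ) (l : ℕ) : ℕ :=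
  if l = 0 then c 0 else if l = k - 1 then 1 else c l + 1

/-- The symmetric tridiagonal matrix `T^{(l0)}` with diagonal `d(l0), …, d(k-1)` and
off-diagonal `√c(l0), …, √c(k-2)`. -/
noncomputable def matT (k : ℕ) (c : ℕ → ℕ) (l0 : ℕ) :
    Matrix (Fin (k - l0)) (Fin (k - l0)) ℝ := fun i j =>
  if i = j then (branchDeg k c (l0 + i.val) : ℝ)
  else if i.val + 1 = j.val then Real.sqrt (c (l0 + i.val))
  else if j.val + 1 = i.val then Real.sqrt (c (l0 + j.val))
  else 0

/-- The tridiagonal matrix `S^{(l0)}` with diagonal `d(l0), …, d(k-1)`, subdiagonal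
entries `-1` and superdiagonal entries `-c(l0), …, -c(k-2)`. -/
def matS (k : ℕ) (c : ℕ → ℕ) (l0 : ℕ) :
    Matrix (Fin (k - l0)) (Fin (k - l0)) ℝ := fun i j =>
  if i = j then (branchDeg k c (l0 + i.val) : ℝ)
  else if i.val + 1 = j.val then -(c (l0 + i.val) : ℝ)
  else if j.val + 1 = i.val then -1
  else 0

/-- `lam` is an eigenvalue of the matrix `A`. -/
def IsEigenvalue {V : Type*} [Fintype V] (A : Matrix V V ℝ) (lam : ℝ) : Prop :=
  ∃ f : V → ℝ, f ≠ 0 ∧ A.mulVec f = lam • f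

/-- The (geometric) multiplicity of `lam` as an eigenvalue of `A`. -/
noncomputable def eigMult {V : Type*} [Fintype V] (A : Matrix V V ℝ) (lam : ℝ) : ℕ :=
  Module.finrank ℝ
    ↥(LinearMap.ker (A.mulVecLin - lam • (LinearMap.id : (V → ℝ) →ₗ[ℝ] (V → ℝ))))

/-- The Dirichlet Laplacian on a subset `Ω` of the vertices of the balanced tree:
the principal submatrix of the Laplacian with rows and columns indexed by `Ω`. -/
noncomputable def dirichletLap (k : ℕ) (c : ℕ → ℕ) (Ω : Set (BTVert k c)) :
    Matrix Ω Ω ℝ := fun u v => (btGraph k c).lapMatrix ℝ u.1 v.1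

/-- Vertices of the tree obtained by identifying the roots of two balanced trees: the
vertices of the first tree, together with the non-root vertices of the second tree. -/
abbrev CombVert (k1 k2 : ℕ) (c1 c2 : ℕ → ℕ) : Type :=
  BTVert k1 c1 ⊕ {w : BTVert k2 c2 // w.1.val ≠ 0}

/-- Adjacency in the combined tree: edges within each tree are kept, and the level-1
vertices of the second tree are joined to the (identified) root, i.e. the root of the first
tree. -/
def combAdj {k1 k2 : ℕ} {c1 c2 : ℕ → ℕ} : CombVert k1 k2 c1 c2 → CombVert k1 k2 c1 c2 → Prop
  | Sum.inl a, Sum.inl b => (btGraph k1 c1).Adj a b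
  | Sum.inr a, Sum.inr b => (btGraph k2 c2).Adj a.1 b.1
  | Sum.inl a, Sum.inr b => a.1.val = 0 ∧ b.1.1.val = 1
  | Sum.inr a, Sum.inl b => b.1.val = 0 ∧ a.1.1.val = 1

/-- The tree obtained by identifying the roots of two balanced trees. -/
def combGraph (k1 k2 : ℕ) (c1 c2 : ℕ → ℕ) : SimpleGraph (CombVert k1 k2 c1 c2) where
  Adj := combAdj
  symm := ⟨by
    rintro (a | a) (b | b) h
    · exact (btGraph k1 c1).adj_symm h
    · exact h
    · exact h
    · exact (btGraph k2 c2).adj_symm h⟩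
  loopless := ⟨by
    rintro (a | a) h
    · exact (btGraph k1 c1).irrefl h
    · exact (btGraph k2 c2).irrefl (v := a.1) h⟩

/-!
Writing `(L g)(u) = ∑_{v ~ u} (g u - g v)`, the zero extension of `f` has the same Laplacian as
`f` at the vertices of `T₁`, and Laplacian zero elsewhere: the only edges leaving `T₁` meet the
root, where `f` vanishes.
-/

open Matrix

namespace SimpleGraph

variable {R V : Type*} [NonAssocRing R] [Fintype V] [DecidableEq V]

theorem lapMatrix_mulVec_apply_eq_sum_adj (G : SimpleGraph V) [DecidableRel G.Adj]
    (x : V → R) (v : V) :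
    (G.lapMatrix R *ᵥ x) v = ∑ u, if G.Adj v u then x v - x u else 0 := by
  rw [lapMatrix_mulVec_apply, ← Finset.sum_filter, ← neighborFinset_eq_filter,
    Finset.sum_sub_distrib, Finset.sum_const, card_neighborFinset_eq_degree, nsmul_eq_mul]

variable {W : Type*} [Fintype W] [DecidableEq W]

theorem lapMatrix_mulVec_sum_elim_zero (K : SimpleGraph (V ⊕ W)) [DecidableRel K.Adj]
    (G : SimpleGraph V) [DecidableRel G.Adj]
    (hKG : ∀ a b, K.Adj (.inl a) (.inl b) ↔ G.Adj a b) (x : V → R)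
    (hx : ∀ a w, K.Adj (.inl a) (.inr w) → x a = 0) :
    K.lapMatrix R *ᵥ Sum.elim x 0 = Sum.elim (G.lapMatrix R *ᵥ x) 0 := by
  funext u
  rw [lapMatrix_mulVec_apply_eq_sum_adj, Fintype.sum_sum_type]
  rcases u with a | w
  · have hcross : ∑ w, (if K.Adj (.inl a) (.inr w) then x a - 0 else 0) = 0 :=
      Finset.sum_eq_zero fun w _ => ite_eq_right_iff.2 fun h => by rw [hx a w h, sub_zero]
    simp only [Sum.elim_inl, Sum.elim_inr, Pi.zero_apply, hcross, hKG, add_zero,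
      lapMatrix_mulVec_apply_eq_sum_adj]
  · have hcross : ∑ a, (if K.Adj (.inr w) (.inl a) then (0 : R) - x a else 0) = 0 :=
      Finset.sum_eq_zero fun a _ => ite_eq_right_iff.2 fun h => by rw [hx a w h.symm, sub_zero]
    simp only [Sum.elim_inl, Sum.elim_inr, Pi.zero_apply, hcross, sub_self, ite_self,
      Finset.sum_const_zero, add_zero]

end SimpleGraph

theorem BTVert.eq_btRoot {k : ℕ} {c : ℕ → ℕ} (hk : 0 < k) (v : BTVert k c) (hv : v.1.val = 0) :
    v = btRoot k c hk := by
  obtain ⟨⟨l, _⟩, _⟩ := v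
  obtain rfl : l = 0 := hv
  exact Sigma.ext rfl (heq_of_eq (funext fun i => i.elim0))

/-- an eigenfunction of the Laplacian of the first balanced tree vanishing at
the root, extended by zero, is an eigenfunction (with the same eigenvalue) of the Laplacian
of the tree obtained by identifying the roots of the two balanced trees. -/
theorem eigenfunction_extends_to_combined_tree (k1 k2 : ℕ) (hk1 : 2 ≤ k1)
    (c1 c2 : ℕ → ℕ)
    (lam : ℝ) (f : BTVert k1 c1 → ℝ)
    (hf : ((btGraph k1 c1).lapMatrix ℝ).mulVec f = lam • f)
    (hroot : f (btRoot k1 c1 (by omega)) = 0) :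
    ((combGraph k1 k2 c1 c2).lapMatrix ℝ).mulVec (Sum.elim f fun _ => 0) =
      lam • Sum.elim f (fun _ => 0) := by
  have hcross : ∀ a w, (combGraph k1 k2 c1 c2).Adj (.inl a) (.inr w) → f a = 0 :=
    fun a _ h => BTVert.eq_btRoot (by omega) a h.1 ▸ hroot
  rw [← Pi.zero_def, SimpleGraph.lapMatrix_mulVec_sum_elim_zero _ (btGraph k1 c1)
    (fun _ _ => Iff.rfl) f hcross, hf]
  ext (a | w) <;> simp
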